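/- arXiv:2303.15756 — 6 statements merged into one kernel-verified Lean document; each statement's English description precedes it below -/
import Mathlib

section
/- Let G be a finite connected graph with a vertex v of degree 1, and let v' be the unique neighbour of v. Then the map sending an orientation O of G to its restriction to G \ {v} gives a bijection between the v-rooted acyclic orientations of G and the v'-rooted acyclic orientations of G \ {v}. -/
/-- An acyclic orientation of a simple graph: each edge gets exactly one direction,
and there are no directed cycles. -/
structure AcyclicOrientation {V : Type*} (G : SimpleGraph V) where
  dir : V → V → Prop
  adj_of_dir : ∀ a b, dir a b → G.Adj a b
  total : ∀ a b, G.Adj a b → dir a b ∨ dir b a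
  asymm : ∀ a b, dir a b → ¬ dir b a
  acyclic : ∀ v, ¬ Relation.TransGen dir v v

/-- `s` is a target: all incident edges are directed towards `s`. -/
def AcyclicOrientation.IsTarget {V : Type*} {G : SimpleGraph V}
    (o : AcyclicOrientation G) (s : V) : Prop :=
  ∀ a, G.Adj a s → o.dir a s

/-- `s` is a source: all incident edges are directed away from `s`. -/
def AcyclicOrientation.IsSource {V : Type*} {G : SimpleGraph V}
    (o : AcyclicOrientation G) (s : V) : Prop :=
  ∀ a, G.Adj s a → o.dir s a

/-- An `s`-rooted acyclic orientation: `s` is the unique target. -/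
def AcyclicOrientation.IsRooted {V : Type*} {G : SimpleGraph V}
    (o : AcyclicOrientation G) (s : V) : Prop :=
  o.IsTarget s ∧ ∀ t, o.IsTarget t → t = s

/-- The number of `s`-rooted acyclic orientations of `G`. -/
noncomputable def rootedCount {V : Type*} (G : SimpleGraph V) (s : V) : ℕ :=
  Nat.card {o : AcyclicOrientation G // o.IsRooted s}

/-!
Every edge at the leaf `v` is the edge `v'v`, and in a `v`-rooted orientation it points into `v`.
So a `v`-rooted orientation is the same as an acyclic orientation of `G \ {v}` extended by
`v' → v`. A target of the restriction other than `v'` would be a second target of the original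
orientation, and the restriction has some target because it is acyclic on a finite vertex set.
Conversely, once `v'v` is directed into `v`, the vertex `v'` stops being a target, and every other
target of the extension is already a target of the orientation of `G \ {v}`.
-/

namespace AcyclicOrientation

variable {V : Type*} {G : SimpleGraph V}

@[ext]
theorem ext {o₁ o₂ : AcyclicOrientation G} (h : ∀ a b, o₁.dir a b ↔ o₂.dir a b) : o₁ = o₂ := by
  obtain ⟨d₁, _, _, _, _⟩ := o₁
  obtain ⟨d₂, _, _, _, _⟩ := o₂
  obtain rfl : d₁ = d₂ := funext₂ fun a b => propext (h a b)
  rfl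

theorem exists_isTarget [Finite V] [Nonempty V] (o : AcyclicOrientation G) :
    ∃ t, o.IsTarget t := by
  let above : V → V → Prop := flip (Relation.TransGen o.dir)
  have : IsTrans V above := ⟨fun _ _ _ hab hbc => hbc.trans hab⟩
  have : Std.Irrefl above := ⟨o.acyclic⟩
  obtain ⟨m, -, hm⟩ :=
    (Finite.wellFounded_of_trans_of_irrefl above).has_min Set.univ Set.univ_nonempty
  exact ⟨m, fun a ha => (o.total a m ha).resolve_right fun h => hm a trivial (.single h)⟩

def induce (o : AcyclicOrientation G) (s : Set V) : AcyclicOrientation (G.induce s) where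
  dir a b := o.dir a b
  adj_of_dir a b := o.adj_of_dir a b
  total a b := o.total a b
  asymm a b := o.asymm a b
  acyclic x hx := o.acyclic x (hx.lift Subtype.val fun _ _ h => h)

variable {v : V}

def extendIntoDir (o : AcyclicOrientation (G.induce {u | u ≠ v})) (a b : V) : Prop :=
  (b = v ∧ G.Adj a v) ∨ ∃ (ha : a ≠ v) (hb : b ≠ v), o.dir ⟨a, ha⟩ ⟨b, hb⟩

theorem ne_of_extendIntoDir {o : AcyclicOrientation (G.induce {u | u ≠ v})} {a b : V}
    (h : extendIntoDir o a b) : a ≠ v := by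
  rcases h with ⟨rfl, hab⟩ | ⟨ha, _, _⟩
  exacts [G.ne_of_adj hab, ha]

theorem exists_transGen_of_transGen_extendIntoDir
    {o : AcyclicOrientation (G.induce {u | u ≠ v})} {a b : V}
    (hab : Relation.TransGen (extendIntoDir o) a b) (hb : b ≠ v) :
    ∃ ha : a ≠ v, Relation.TransGen o.dir ⟨a, ha⟩ ⟨b, hb⟩ := by
  induction hab with
  | single h =>
    rcases h with ⟨hbv, -⟩ | ⟨ha, _, h⟩
    exacts [absurd hbv hb, ⟨ha, .single h⟩]
  | tail _ h ih =>
    rcases h with ⟨hbv, -⟩ | ⟨hc, _, h⟩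
    exacts [absurd hbv hb, (ih hc).imp fun _ hac => hac.tail h]

def extendInto (o : AcyclicOrientation (G.induce {u | u ≠ v})) : AcyclicOrientation G where
  dir := extendIntoDir o
  adj_of_dir a b := by
    rintro (⟨rfl, hab⟩ | ⟨_, _, h⟩)
    exacts [hab, o.adj_of_dir _ _ h]
  total a b hab := by
    by_cases hb : b = v
    · exact .inl (.inl ⟨hb, hb ▸ hab⟩)
    by_cases ha : a = v
    · exact .inr (.inl ⟨ha, ha ▸ hab.symm⟩)
    exact (o.total ⟨a, ha⟩ ⟨b, hb⟩ hab).imp (fun h => .inr ⟨ha, hb, h⟩) fun h => .inr ⟨hb, ha, h⟩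
  asymm a b := by
    rintro (⟨rfl, hab⟩ | ⟨ha, _, h⟩) (⟨rfl, -⟩ | ⟨hb', _, h'⟩)
    exacts [G.irrefl hab, hb' rfl, ha rfl, o.asymm _ _ h h']
  acyclic x hx := by
    have hxv : x ≠ v := by
      obtain ⟨y, hxy, -⟩ := Relation.TransGen.head'_iff.mp hx
      exact ne_of_extendIntoDir hxy
    obtain ⟨_, hcycle⟩ := exists_transGen_of_transGen_extendIntoDir hx hxv
    exact o.acyclic _ hcycle

theorem isTarget_extendInto (o : AcyclicOrientation (G.induce {u | u ≠ v})) :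
    o.extendInto.IsTarget v :=
  fun _ ha => .inl ⟨rfl, ha⟩

theorem induce_extendInto (o : AcyclicOrientation (G.induce {u | u ≠ v})) :
    o.extendInto.induce {u | u ≠ v} = o := by
  ext a b
  constructor
  · rintro (⟨hb, -⟩ | ⟨_, _, h⟩)
    exacts [absurd hb b.2, h]
  · exact fun h => .inr ⟨a.2, b.2, h⟩

theorem extendInto_induce (o : AcyclicOrientation G) (hv : o.IsTarget v) :
    (o.induce {u | u ≠ v}).extendInto = o := by
  ext a b
  constructor
  · rintro (⟨rfl, hab⟩ | ⟨_, _, h⟩)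
    exacts [hv a hab, h]
  · intro h
    by_cases hb : b = v
    · exact .inl ⟨hb, hb ▸ o.adj_of_dir a b h⟩
    · have ha : a ≠ v := by
        rintro rfl
        exact o.asymm _ _ (hv b (o.adj_of_dir _ _ h).symm) h
      exact .inr ⟨ha, hb, h⟩

variable {v' : V}

theorem IsRooted.induce [Finite V] {o : AcyclicOrientation G} (ho : o.IsRooted v)
    (hv : ∀ a, G.Adj a v → a = v') (hadj : G.Adj v v') :
    (o.induce {u | u ≠ v}).IsRooted ⟨v', hadj.ne'⟩ := by
  have target_eq : ∀ t, (o.induce {u | u ≠ v}).IsTarget t → t = ⟨v', hadj.ne'⟩ := by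
    intro t ht
    by_contra htv'
    -- a target other than `v'` is not adjacent to `v`, so it is a target of `o` as well
    refine t.2 (ho.2 t fun a hat => ?_)
    by_cases hav : a = v
    · exact absurd (Subtype.ext (hv t (hav ▸ hat.symm))) htv'
    · exact ht ⟨a, hav⟩ hat
  have : Nonempty {u | u ≠ v} := ⟨⟨v', hadj.ne'⟩⟩
  obtain ⟨t, ht⟩ := (o.induce {u | u ≠ v}).exists_isTarget
  exact ⟨target_eq t ht ▸ ht, target_eq⟩

theorem IsRooted.extendInto {o : AcyclicOrientation (G.induce {u | u ≠ v})} (hadj : G.Adj v v')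
    (ho : o.IsRooted ⟨v', hadj.ne'⟩) : o.extendInto.IsRooted v := by
  refine ⟨o.isTarget_extendInto, fun t ht => by_contra fun htv => ?_⟩
  have hvt : ¬G.Adj v t := fun hvt => by
    rcases ht v hvt with ⟨-, hvv⟩ | ⟨hv, -⟩
    exacts [G.irrefl hvv, hv rfl]
  have htarget : o.IsTarget ⟨t, htv⟩ := fun a hat => by
    rcases ht a hat with ⟨htv', -⟩ | ⟨_, _, h⟩
    exacts [absurd htv' htv, h]
  obtain rfl : t = v' := congrArg Subtype.val (ho.2 _ htarget)
  exact hvt hadj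

end AcyclicOrientation

theorem degree_one_rooted_orientation_equiv_general {V : Type*} [Fintype V]
    (G : SimpleGraph V) [DecidableRel G.Adj] (v v' : V)
    (hdeg : G.degree v = 1) (hadj : G.Adj v v') :
    ∃ e : {o : AcyclicOrientation G // o.IsRooted v} ≃
        {o' : AcyclicOrientation (G.induce {u | u ≠ v}) // o'.IsRooted ⟨v', hadj.ne'⟩},
      ∀ (o : {o : AcyclicOrientation G // o.IsRooted v}) (a b : {u | u ≠ v}),
        (e o).1.dir a b ↔ o.1.dir ↑a ↑b := by
  have hv : ∀ a, G.Adj a v → a = v' := fun a hav =>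
    (SimpleGraph.degree_eq_one_iff_existsUnique_adj.mp hdeg).unique hav.symm hadj
  exact ⟨{ toFun := fun o => ⟨o.1.induce _, o.2.induce hv hadj⟩
           invFun := fun o => ⟨o.1.extendInto, o.2.extendInto hadj⟩
           left_inv := fun o => Subtype.ext (o.1.extendInto_induce o.2.1)
           right_inv := fun o => Subtype.ext o.1.induce_extendInto },
    fun _ _ _ => Iff.rfl⟩

/-- If `v` has degree 1 with unique neighbour `v'`, then restriction of orientations
gives a bijection between `v`-rooted acyclic orientations of `G` and `v'`-rooted
acyclic orientations of `G \ {v}`. -/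
theorem degree_one_rooted_orientation_equiv {V : Type*} [Fintype V] [DecidableEq V]
    (G : SimpleGraph V) [DecidableRel G.Adj] (hG : G.Connected) (v v' : V)
    (hdeg : G.degree v = 1) (hadj : G.Adj v v') :
    ∃ e : {o : AcyclicOrientation G // o.IsRooted v} ≃
        {o' : AcyclicOrientation (G.induce {u | u ≠ v}) // o'.IsRooted ⟨v', hadj.ne'⟩},
      ∀ (o : {o : AcyclicOrientation G // o.IsRooted v}) (a b : {u | u ≠ v}),
        (e o).1.dir a b ↔ o.1.dir ↑a ↑b :=
  degree_one_rooted_orientation_equiv_general G v v' hdeg hadj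
end

section
/- Let G be a finite connected graph, v and w non-adjacent distinct vertices of G, and G' the graph obtained by adding the edge (v,w) to G. Then the number of v-rooted acyclic orientations of G is strictly less than the number of v-rooted acyclic orientations of G'. -/
section Aux

variable {V : Type*}

lemma AcyclicOrientation.dir_injective {G : SimpleGraph V} :
    Function.Injective (AcyclicOrientation.dir (G := G)) := by
  rintro ⟨d, _, _, _, _⟩ ⟨d', _, _, _, _⟩ h
  simp only at h
  subst h
  rfl

instance {G : SimpleGraph V} [Finite V] : Finite (AcyclicOrientation G) :=
  Finite.of_injective _ AcyclicOrientation.dir_injective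

/-- In a rooted orientation the root has no outgoing edge. -/
lemma AcyclicOrientation.not_dir_root {G : SimpleGraph V} {o : AcyclicOrientation G} {s : V}
    (h : o.IsTarget s) (x : V) : ¬ o.dir s x := fun hd =>
  o.asymm x s (h x (o.adj_of_dir s x hd).symm) hd

/-- A vertex distinct from `v` has a neighbor strictly closer to `v`. -/
lemma exists_adj_dist_lt {G : SimpleGraph V} (hG : G.Connected) (v u : V) (h : u ≠ v) :
    ∃ x, G.Adj u x ∧ G.dist v x < G.dist v u := by
  obtain ⟨p, hp⟩ := hG.exists_walk_length_eq_dist u v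
  cases p with
  | nil => exact absurd rfl h
  | cons hadj q =>
      rename_i x
      refine ⟨x, hadj, ?_⟩
      have h1 : G.dist x v ≤ q.length := SimpleGraph.dist_le q
      have h2 : G.dist u v = q.length + 1 := by
        simpa [SimpleGraph.Walk.length_cons] using hp.symm
      rw [SimpleGraph.dist_comm (u := v) (v := x), SimpleGraph.dist_comm (u := v) (v := u)]
      omega

end Aux

/-- Adding an edge between two non-adjacent vertices strictly increases the number
of `v`-rooted acyclic orientations. -/
theorem rootedCount_lt_of_addEdge {V : Type*} [Finite V] (G : SimpleGraph V)
    (hG : G.Connected) (v w : V) (hne : v ≠ w) (hnadj : ¬ G.Adj v w) :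
    rootedCount G v < rootedCount (G ⊔ SimpleGraph.fromEdgeSet {s(v, w)}) v := by
  classical
  set G' : SimpleGraph V := G ⊔ SimpleGraph.fromEdgeSet {s(v, w)} with hG'def
  have hle : G ≤ G' := le_sup_left
  have hG' : G'.Connected := hG.mono hle
  have hadj'vw : G'.Adj v w := by
    rw [hG'def]
    simp [SimpleGraph.fromEdgeSet_adj, hne]
  have hG'adj : ∀ a b, G'.Adj a b → G.Adj a b ∨ (a = v ∧ b = w) ∨ (a = w ∧ b = v) := by
    intro a b hab
    rw [hG'def] at hab
    rcases hab with h | h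
    · exact Or.inl h
    · rw [SimpleGraph.fromEdgeSet_adj] at h
      rcases h with ⟨hmem, -⟩
      simp only [Set.mem_singleton_iff, Sym2.eq_iff] at hmem
      tauto
  -- The extension map: add the edge w → v to a v-rooted orientation of G.
  have extend : ∀ o : AcyclicOrientation G, o.IsRooted v →
      ∃ o' : AcyclicOrientation G',
        (o'.dir = fun a b => o.dir a b ∨ (a = w ∧ b = v)) ∧ o'.IsRooted v := by
    intro o ho
    have hnodirout : ∀ x, ¬ o.dir v x := AcyclicOrientation.not_dir_root ho.1
    set d : V → V → Prop := fun a b => o.dir a b ∨ (a = w ∧ b = v) with hd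
    have hdadj : ∀ a b, d a b → G'.Adj a b := by
      rintro a b (h | ⟨haw, hbv⟩)
      · exact hle (o.adj_of_dir _ _ h)
      · rw [haw, hbv]; exact hadj'vw.symm
    have hdasymm : ∀ a b, d a b → ¬ d b a := by
      rintro a b (h | ⟨haw, hbv⟩) (h' | ⟨hbw, hav⟩)
      · exact o.asymm _ _ h h'
      · rw [hav] at h; exact hnodirout b h
      · rw [hbv] at h'; exact hnodirout a h'
      · rw [haw] at hav; exact hne hav.symm
    refine ⟨⟨d, hdadj, ?_, hdasymm, ?_⟩, rfl, ?_, ?_⟩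
    · intro a b hab
      rcases hG'adj a b hab with h | ⟨hav, hbw⟩ | ⟨haw, hbv⟩
      · rcases o.total a b h with h' | h'
        · exact Or.inl (Or.inl h')
        · exact Or.inr (Or.inl h')
      · exact Or.inr (Or.inr ⟨hbw, hav⟩)
      · exact Or.inl (Or.inr ⟨haw, hbv⟩)
    · -- acyclicity
      intro u hu
      have key : ∀ a b, Relation.TransGen d a b → Relation.TransGen o.dir a b ∨ b = v := by
        intro a b hab
        induction hab with
        | single h =>
            rcases h with h | ⟨-, hbv⟩
            · exact Or.inl (Relation.TransGen.single h)
            · exact Or.inr hbv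
        | tail _ h ih =>
            rcases h with h | ⟨-, hcv⟩
            · rcases ih with ih | hbv
              · exact Or.inl (ih.tail h)
              · rename_i b' c' _
                rw [hbv] at h
                exact absurd h (hnodirout _)
            · exact Or.inr hcv
      rcases key u u hu with h | huv
      · exact o.acyclic u h
      · rw [huv] at hu
        obtain ⟨c, h, -⟩ := Relation.TransGen.head'_iff.mp hu
        rcases h with h | ⟨hvw, -⟩
        · exact hnodirout _ h
        · exact hne hvw
    · -- v is a target
      intro a hav
      rcases hG'adj a v hav with h | ⟨-, hvw⟩ | ⟨haw, -⟩
      · exact Or.inl (ho.1 a h)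
      · exact absurd hvw.symm hne.symm
      · exact Or.inr ⟨haw, rfl⟩
    · -- uniqueness of target
      intro t ht
      refine ho.2 t ?_
      intro a hat
      rcases ht a (hle hat) with h | ⟨haw, htv⟩
      · exact h
      · rw [haw, htv] at hat
        exact absurd hat.symm hnadj
  -- Build the special orientation of G' whose restriction has w as a second target.
  obtain ⟨f, hf⟩ := Countable.exists_injective_nat V
  set ι : V → ℕ := fun x => if x = w then 0 else f x + 1 with hι
  have hιinj : Function.Injective ι := by
    intro x y hxy
    by_cases hx : x = w <;> by_cases hy : y = w
    · rw [hx, hy]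
    · simp [hι, hx, hy] at hxy
    · simp [hι, hx, hy] at hxy
    · simp [hι, hx, hy] at hxy
      rw [hf hxy]
  set rk : V → ℕ ×ₗ ℕ := fun u => toLex (G'.dist v u, ι u) with hrk
  have hrkinj : Function.Injective rk := by
    intro x y hxy
    have := congrArg (fun p => (ofLex p).2) hxy
    exact hιinj this
  set d2 : V → V → Prop := fun a b => G'.Adj a b ∧ rk b < rk a with hd2
  have hd2trans : ∀ a b, Relation.TransGen d2 a b → rk b < rk a := by
    intro a b hab
    induction hab with
    | single h => exact h.2
    | tail _ h ih => exact h.2.trans ih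
  have hdistvw : G'.dist v w = 1 := SimpleGraph.dist_eq_one_iff_adj.mpr hadj'vw
  have hrkw_lt : ∀ a, G.Adj a w → rk w < rk a := by
    intro a haw
    have hav : a ≠ v := fun h => hnadj (by rw [h] at haw; exact haw)
    have haw' : a ≠ w := haw.ne
    have h1 : 1 ≤ G'.dist v a := hG'.pos_dist_of_ne (Ne.symm hav)
    rw [hrk]
    rw [Prod.Lex.lt_iff]
    rcases lt_or_eq_of_le h1 with h | h
    · exact Or.inl (by simpa [hdistvw] using h)
    · refine Or.inr ⟨by simp [hdistvw, ← h], ?_⟩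
      simp [hι, haw']
  have hd2total : ∀ a b, G'.Adj a b → d2 a b ∨ d2 b a := by
    intro a b hab
    rcases lt_trichotomy (rk a) (rk b) with h | h | h
    · exact Or.inr ⟨hab.symm, h⟩
    · exact absurd (hrkinj h) hab.ne
    · exact Or.inl ⟨hab, h⟩
  obtain ⟨o2, ho2dir⟩ : ∃ o2 : AcyclicOrientation G', o2.dir = d2 :=
    ⟨⟨d2, fun a b h => h.1, hd2total,
      fun a b h h' => absurd (h.2.trans h'.2) (lt_irrefl _),
      fun u hu => absurd (hd2trans u u hu) (lt_irrefl _)⟩, rfl⟩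
  have ho2target : o2.IsTarget v := by
    intro a hav
    rw [ho2dir]
    refine ⟨hav, ?_⟩
    rw [hrk, Prod.Lex.lt_iff]
    refine Or.inl ?_
    have : v ≠ a := fun h => hav.ne h.symm
    simpa [SimpleGraph.dist_self] using hG'.pos_dist_of_ne this
  have ho2rooted : o2.IsRooted v := by
    refine ⟨ho2target, ?_⟩
    intro t ht
    by_contra htv
    obtain ⟨x, hx, hdx⟩ := exists_adj_dist_lt hG' v t htv
    have hdtx : o2.dir t x := by
      rw [ho2dir]
      exact ⟨hx, by rw [hrk, Prod.Lex.lt_iff]; exact Or.inl hdx⟩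
    exact o2.asymm t x hdtx (ht x hx.symm)
  have ho2w : ∀ a, G.Adj a w → o2.dir a w := by
    intro a haw
    rw [ho2dir]
    exact ⟨hle haw, hrkw_lt a haw⟩
  -- Count.
  have : Fintype {o : AcyclicOrientation G // o.IsRooted v} := Fintype.ofFinite _
  have : Fintype {o : AcyclicOrientation G' // o.IsRooted v} := Fintype.ofFinite _
  rw [rootedCount, rootedCount, Nat.card_eq_fintype_card, Nat.card_eq_fintype_card]
  set F : {o : AcyclicOrientation G // o.IsRooted v} →
      {o : AcyclicOrientation G' // o.IsRooted v} :=
    fun o => ⟨(extend o.1 o.2).choose,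
      (extend o.1 o.2).choose_spec.2⟩ with hF
  have hFdir : ∀ o : {o : AcyclicOrientation G // o.IsRooted v},
      (F o).1.dir = fun a b => o.1.dir a b ∨ (a = w ∧ b = v) :=
    fun o => (extend o.1 o.2).choose_spec.1
  have hFinj : Function.Injective F := by
    intro o1 o2 h
    have hd : (F o1).1.dir = (F o2).1.dir := by rw [h]
    rw [hFdir, hFdir] at hd
    ext1
    apply AcyclicOrientation.dir_injective
    funext a b
    ext
    have hiff := congrFun (congrFun hd a) b
    simp only [eq_iff_iff] at hiff
    constructor
    · intro hab
      rcases hiff.mp (Or.inl hab) with h' | ⟨haw, hbv⟩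
      · exact h'
      · rw [haw, hbv] at hab
        exact absurd (o1.1.adj_of_dir _ _ hab) (fun hh => hnadj hh.symm)
    · intro hab
      rcases hiff.mpr (Or.inl hab) with h' | ⟨haw, hbv⟩
      · exact h'
      · rw [haw, hbv] at hab
        exact absurd (o2.1.adj_of_dir _ _ hab) (fun hh => hnadj hh.symm)
  refine Fintype.card_lt_of_injective_of_notMem F hFinj (b := ⟨o2, ho2rooted⟩) ?_
  rintro ⟨o, hFo⟩
  have hval : (F o).1 = o2 := congrArg Subtype.val hFo
  have hd := hFdir o
  rw [hval] at hd
  have hwt : o.1.IsTarget w := by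
    intro a haw
    have h2 : o2.dir a w := ho2w a haw
    rw [hd] at h2
    rcases h2 with h2 | ⟨-, hwv⟩
    · exact h2
    · exact absurd hwv.symm hne
  exact hne (o.2.2 w hwt).symm
end

section
/- If G is a graph on n vertices that is not the complete graph, then for any vertex s, the number of s-rooted acyclic orientations of G is strictly less than (n−1)!. Consequently, among all connected graphs on n vertices, the complete graph uniquely maximizes the number of s-rooted acyclic orientations. -/
/-! Every `s`-rooted acyclic orientation is induced by a linear ordering of the vertices other than
`s`, with `s` put on top: each edge points towards its later endpoint. Hence there are at most
`(n - 1)!` of them. If `G` has a non-edge `ab`, the bound is strict: when `b = s`, an ordering with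
`a` last makes `a` a second target; otherwise, the two orderings that put `a` and `b` first, in
either order, induce the same orientation.
-/

open Function Relation
open scoped Nat

theorem exists_equiv_fin_lt_of_acyclic {α : Type*} [Fintype α] (R : α → α → Prop)
    (hR : ∀ a, ¬ TransGen R a a) :
    ∃ f : α ≃ Fin (Fintype.card α), ∀ a b, R a b → f a < f b := by
  have : IsPartialOrder α (ReflTransGen R) :=
    { refl := fun _ => .refl
      trans := fun _ _ _ => .trans
      antisymm := fun a b hab hba => by
        rcases reflTransGen_iff_eq_or_transGen.mp hab with rfl | hab
        · rfl
        · exact absurd (hab.trans_left hba) (hR a) }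
  obtain ⟨r, hr, hRr⟩ := extend_partialOrder (ReflTransGen R)
  let : LinearOrder α :=
    { le := r, le_refl := hr.refl, le_trans := hr.trans, le_antisymm := hr.antisymm,
      le_total := hr.total, toDecidableLE := Classical.decRel _ }
  refine ⟨(monoEquivOfFin α rfl).symm.toEquiv, fun a b hab =>
    (monoEquivOfFin α rfl).symm.strictMono ?_⟩
  exact lt_of_le_of_ne (hRr _ _ (.single hab)) fun h => by subst h; exact hR a (.single hab)

theorem Equiv.exists_apply_eq_apply_eq {α β : Type*} [DecidableEq α] [DecidableEq β] (e : α ≃ β)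
    {a a' : α} (ha : a ≠ a') {i i' : β} (hi : i ≠ i') : ∃ f : α ≃ β, f a = i ∧ f a' = i' := by
  set g := e.trans (Equiv.swap (e a) i)
  have hga : g a = i := by simp [g]
  have hga' : g a' ≠ i := hga ▸ g.injective.ne ha.symm
  exact ⟨g.trans (Equiv.swap (g a') i'), by simp [hga, Equiv.swap_apply_of_ne_of_ne hga'.symm hi],
    by simp⟩

theorem Nat.swap_succ_lt_swap_succ_iff {n u v : ℕ} (h : ¬(u = n ∧ v = n + 1))
    (h' : ¬(u = n + 1 ∧ v = n)) :
    Equiv.swap n (n + 1) u < Equiv.swap n (n + 1) v ↔ u < v := by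
  simp only [Equiv.swap_apply_def]
  split_ifs <;> omega

section CardSubtype

variable {α β : Type*} [Finite α] (Φ : α → β) {p : β → Prop}

theorem Nat.card_subtype_le_of_forall_mem_range (hp : ∀ b, p b → b ∈ Set.range Φ) :
    Nat.card {b // p b} ≤ Nat.card α := by
  choose σ hσ using fun b : {b // p b} => hp b b.2
  exact Nat.card_le_card_of_injective σ fun b b' h => Subtype.ext (by rw [← hσ b, ← hσ b', h])

theorem Nat.card_subtype_lt_of_forall_mem_range (hp : ∀ b, p b → b ∈ Set.range Φ)
    (h : ¬ Injective Φ ∨ ∃ a, ¬ p (Φ a)) :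
    Nat.card {b // p b} < Nat.card α := by
  choose σ hσ using fun b : {b // p b} => hp b b.2
  have hσ_inj : Injective σ := fun b b' h => Subtype.ext (by rw [← hσ b, ← hσ b', h])
  have hσ_not_surj : ¬ Surjective σ := by
    intro hσ_surj
    rcases h with hΦ | ⟨a, ha⟩
    · refine hΦ fun a a' h => ?_
      obtain ⟨b, rfl⟩ := hσ_surj a
      obtain ⟨b', rfl⟩ := hσ_surj a'
      rw [hσ, hσ] at h
      rw [Subtype.ext h]
    · obtain ⟨b, rfl⟩ := hσ_surj a
      exact ha ((hσ b).symm ▸ b.2)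
  have := Fintype.ofFinite α
  have := Finite.of_injective σ hσ_inj
  have := Fintype.ofFinite {b // p b}
  simpa only [Nat.card_eq_fintype_card] using
    Fintype.card_lt_of_injective_not_surjective σ hσ_inj hσ_not_surj

end CardSubtype

section RootedRank

variable {V : Type*} [DecidableEq V] {s : V} {k : ℕ}

def rootedRank (s : V) (f : {x // x ≠ s} ≃ Fin k) (a : V) : ℕ :=
  if h : a = s then k else f ⟨a, h⟩

@[simp]
theorem rootedRank_root (f : {x // x ≠ s} ≃ Fin k) : rootedRank s f s = k := by
  simp [rootedRank]

theorem rootedRank_of_ne (f : {x // x ≠ s} ≃ Fin k) {a : V} (ha : a ≠ s) :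
    rootedRank s f a = f ⟨a, ha⟩ := by
  simp [rootedRank, ha]

theorem rootedRank_lt_root (f : {x // x ≠ s} ≃ Fin k) {a : V} (ha : a ≠ s) :
    rootedRank s f a < k := by
  simp [rootedRank_of_ne f ha]

theorem rootedRank_injective (f : {x // x ≠ s} ≃ Fin k) : Injective (rootedRank s f) := by
  intro a b hab
  by_cases ha : a = s <;> by_cases hb : b = s
  · rw [ha, hb]
  · rw [ha, rootedRank_root] at hab
    exact absurd hab (rootedRank_lt_root f hb).ne'
  · rw [hb, rootedRank_root] at hab
    exact absurd hab (rootedRank_lt_root f ha).ne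
  · rw [rootedRank_of_ne f ha, rootedRank_of_ne f hb, Fin.val_inj, f.apply_eq_iff_eq] at hab
    exact congrArg Subtype.val hab

theorem rootedRank_swap_trans (f : {x // x ≠ s} ≃ Fin k) {a b : V} (ha : a ≠ s) (hb : b ≠ s) :
    rootedRank s ((Equiv.swap ⟨a, ha⟩ ⟨b, hb⟩).trans f) = rootedRank s f ∘ Equiv.swap a b := by
  funext x
  by_cases hx : x = s
  · subst hx
    simp [Equiv.swap_apply_of_ne_of_ne ha.symm hb.symm]
  · simp only [rootedRank, hx, Equiv.trans_apply, comp_apply, Equiv.swap_apply_def]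
    split_ifs <;> simp_all

end RootedRank

namespace AcyclicOrientation

variable {V : Type*} {G : SimpleGraph V}

theorem ext_dir {o o' : AcyclicOrientation G} (h : o.dir = o'.dir) : o = o' := by
  cases o; cases o'; cases h; rfl

def ofRank {α : Type*} [LinearOrder α] (G : SimpleGraph V) (r : V → α) (hr : Injective r) :
    AcyclicOrientation G where
  dir a b := G.Adj a b ∧ r a < r b
  adj_of_dir _ _ h := h.1
  total a b hab := (lt_or_gt_of_ne (hr.ne hab.ne)).imp (⟨hab, ·⟩) (⟨hab.symm, ·⟩)
  asymm _ _ h h' := lt_asymm h.2 h'.2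
  acyclic v hv := lt_irrefl (r v) <| by
    simpa [transGen_eq_self] using hv.lift r fun _ _ h => h.2

theorem ofRank_comp_swap [DecidableEq V] (r : V → ℕ) (hr : Injective r) {a b : V}
    (hab : ¬ G.Adj a b) (hr_succ : r b = r a + 1) :
    ofRank G (r ∘ Equiv.swap a b) (hr.comp (Equiv.swap a b).injective) = ofRank G r hr := by
  refine ext_dir (funext₂ fun x y => propext (and_congr_right fun hxy => ?_))
  rw [← hr.swap_comp, comp_apply, comp_apply, hr_succ, Nat.swap_succ_lt_swap_succ_iff]
  · rintro ⟨hx, hy⟩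
    obtain rfl := hr hx
    obtain rfl := hr (hy.trans hr_succ.symm)
    exact hab hxy
  · rintro ⟨hx, hy⟩
    obtain rfl := hr (hx.trans hr_succ.symm)
    obtain rfl := hr hy
    exact hab hxy.symm

section Ordering

variable [DecidableEq V] {s : V} {k : ℕ}

def ofOrdering (G : SimpleGraph V) (s : V) (f : {x // x ≠ s} ≃ Fin k) : AcyclicOrientation G :=
  ofRank G (rootedRank s f) (rootedRank_injective f)

theorem ofOrdering_swap_trans (f : {x // x ≠ s} ≃ Fin k) {a b : V} (ha : a ≠ s) (hb : b ≠ s)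
    (hab : ¬ G.Adj a b) (hf : (f ⟨b, hb⟩ : ℕ) = f ⟨a, ha⟩ + 1) :
    ofOrdering G s ((Equiv.swap ⟨a, ha⟩ ⟨b, hb⟩).trans f) = ofOrdering G s f := by
  simp only [ofOrdering, rootedRank_swap_trans]
  exact ofRank_comp_swap _ _ hab (by rwa [rootedRank_of_ne f ha, rootedRank_of_ne f hb])

theorem isTarget_ofOrdering_of_forall_le (f : {x // x ≠ s} ≃ Fin k) {a : V} (ha : a ≠ s)
    (has : ¬ G.Adj a s) (hf : ∀ y, f y ≤ f ⟨a, ha⟩) : (ofOrdering G s f).IsTarget a := by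
  intro y hya
  have hy : y ≠ s := by rintro rfl; exact has hya.symm
  refine ⟨hya, ?_⟩
  rw [rootedRank_of_ne f ha, rootedRank_of_ne f hy, Fin.val_fin_lt]
  exact (hf _).lt_of_ne (f.injective.ne fun h => hya.ne (congrArg Subtype.val h))

theorem exists_ofOrdering_eq [Fintype V] (o : AcyclicOrientation G) (hs : o.IsTarget s) :
    ∃ f : {x // x ≠ s} ≃ Fin (Fintype.card {x // x ≠ s}), ofOrdering G s f = o := by
  obtain ⟨f, hf⟩ := exists_equiv_fin_lt_of_acyclic (fun x y : {x // x ≠ s} => o.dir x y)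
    fun x hx => o.acyclic x (hx.lift Subtype.val fun _ _ h => h)
  refine ⟨f, ext_dir (funext₂ fun x y => propext ⟨fun ⟨hxy, hlt⟩ => ?_, fun hxy => ?_⟩)⟩
  · by_cases hy : y = s
    · subst hy
      exact hs x hxy
    by_cases hx : x = s
    · rw [hx, rootedRank_root] at hlt
      exact absurd hlt (rootedRank_lt_root f hy).not_gt
    refine (o.total x y hxy).resolve_right fun hyx => hlt.not_gt ?_
    rw [rootedRank_of_ne f hx, rootedRank_of_ne f hy]
    exact hf ⟨y, hy⟩ ⟨x, hx⟩ hyx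
  · have hadj := o.adj_of_dir x y hxy
    refine ⟨hadj, ?_⟩
    by_cases hy : y = s
    · subst hy
      rw [rootedRank_root]
      exact rootedRank_lt_root f hadj.ne
    by_cases hx : x = s
    · subst hx
      exact absurd (hs y hadj.symm) (o.asymm _ _ hxy)
    rw [rootedRank_of_ne f hx, rootedRank_of_ne f hy]
    exact hf ⟨x, hx⟩ ⟨y, hy⟩ hxy

variable [Fintype V]

theorem exists_not_isRooted_ofOrdering {a : V} (ha : a ≠ s) (has : ¬ G.Adj a s) :
    ∃ f : {x // x ≠ s} ≃ Fin (Fintype.card {x // x ≠ s}), ¬ (ofOrdering G s f).IsRooted s := by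
  set e := Fintype.equivFin {x // x ≠ s}
  have hpos : 0 < Fintype.card {x // x ≠ s} := Fintype.card_pos_iff.2 ⟨⟨a, ha⟩⟩
  let last : Fin (Fintype.card {x // x ≠ s}) := ⟨_, Nat.sub_one_lt_of_lt hpos⟩
  set f := e.trans (Equiv.swap (e ⟨a, ha⟩) last)
  have hfa : f ⟨a, ha⟩ = last := by simp [f]
  have htarget := isTarget_ofOrdering_of_forall_le f ha has fun y => by
    rw [hfa, Fin.le_def]
    exact Nat.le_sub_one_of_lt (f y).isLt
  exact ⟨f, fun hroot => ha (hroot.2 a htarget)⟩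

theorem not_injective_ofOrdering {a b : V} (ha : a ≠ s) (hb : b ≠ s) (hab : a ≠ b)
    (hadj : ¬ G.Adj a b) :
    ¬ Injective (ofOrdering G s : ({x // x ≠ s} ≃ Fin (Fintype.card {x // x ≠ s})) → _) := by
  have hAB : (⟨a, ha⟩ : {x // x ≠ s}) ≠ ⟨b, hb⟩ := by simpa using hab
  have htwo : 1 < Fintype.card {x // x ≠ s} := Fintype.one_lt_card_iff.2 ⟨_, _, hAB⟩
  obtain ⟨f, hfa, hfb⟩ := (Fintype.equivFin _).exists_apply_eq_apply_eq hAB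
    (i := ⟨0, by omega⟩) (i' := ⟨1, htwo⟩) (by simp [Fin.ext_iff])
  intro hinj
  have hswap := hinj (ofOrdering_swap_trans f ha hb hadj (by simp [hfa, hfb]))
  have := congrArg (fun g => (g ⟨a, ha⟩ : ℕ)) hswap
  simp [hfa, hfb] at this

end Ordering

end AcyclicOrientation

open AcyclicOrientation

section RootedCount

variable {V : Type*} [Fintype V] [DecidableEq V] (G : SimpleGraph V) (s : V)

theorem card_equiv_fin_subtype_ne :
    Nat.card ({x // x ≠ s} ≃ Fin (Fintype.card {x // x ≠ s})) = (Fintype.card V - 1)! := by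
  rw [Nat.card_eq_fintype_card, Fintype.card_equiv (Fintype.equivFin _)]
  simp [Fintype.card_subtype_compl]

theorem rootedCount_le : rootedCount G s ≤ (Fintype.card V - 1)! :=
  card_equiv_fin_subtype_ne s ▸ Nat.card_subtype_le_of_forall_mem_range (ofOrdering G s)
    fun o ho => exists_ofOrdering_eq o ho.1

theorem rootedCount_lt_of_ne_top (hG : G ≠ ⊤) : rootedCount G s < (Fintype.card V - 1)! := by
  obtain ⟨a, b, hab, hadj⟩ := SimpleGraph.ne_top_iff_exists_not_adj.1 hG
  rw [← card_equiv_fin_subtype_ne s]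
  refine Nat.card_subtype_lt_of_forall_mem_range (ofOrdering G s)
    (fun o ho => exists_ofOrdering_eq o ho.1) ?_
  rcases eq_or_ne b s with rfl | hb
  · exact .inr (exists_not_isRooted_ofOrdering hab hadj)
  rcases eq_or_ne a s with rfl | ha
  · exact .inr (exists_not_isRooted_ofOrdering hb (hadj ∘ .symm))
  exact .inl (not_injective_ofOrdering ha hb hab hadj)

end RootedCount

/-- A non-complete graph on `n` vertices has strictly fewer than `(n-1)!` `s`-rooted
acyclic orientations; consequently the complete graph uniquely maximizes the number
of `s`-rooted acyclic orientations among connected graphs on `n` vertices. -/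
theorem rootedCount_lt_of_ne_complete (n : ℕ) (s : Fin n) :
    (∀ G : SimpleGraph (Fin n), G ≠ ⊤ → rootedCount G s < Nat.factorial (n - 1)) ∧
    (∀ G : SimpleGraph (Fin n), G.Connected →
      rootedCount G s ≤ Nat.factorial (n - 1) ∧
      (rootedCount G s = Nat.factorial (n - 1) → G = ⊤)) := by
  have hlt (G : SimpleGraph (Fin n)) (hG : G ≠ ⊤) : rootedCount G s < (n - 1)! := by
    simpa using rootedCount_lt_of_ne_top G s hG
  refine ⟨hlt, fun G _ => ⟨by simpa using rootedCount_le G s, fun heq => ?_⟩⟩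
  by_contra hG
  exact (hlt G hG).ne heq
end

section
/- A fixed point j of a permutation π of {1,...,n}, where π is irreducible and n ≥ 2, gives rise to a 321 pattern: there exist i < j < k with π(i) > π(j) = j > π(k). -/
/-- A permutation of `{1,…,n}` (modelled on `Fin n`) is irreducible if no proper
initial segment `{1,…,k}` (`1 ≤ k < n`) is mapped to itself. -/
def PermIrreducible (n : ℕ) (π : Equiv.Perm (Fin n)) : Prop :=
  ¬ ∃ k : ℕ, 1 ≤ k ∧ k < n ∧ ∀ i : Fin n, (i : ℕ) < k → ((π i : ℕ) < k)

/-- A fixed point of an irreducible permutation (of length `≥ 2`) is the middle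
element of a `321` pattern. -/
theorem fixed_point_gives_321 (n : ℕ) (hn : 2 ≤ n) (π : Equiv.Perm (Fin n))
    (hirr : PermIrreducible n π) (j : Fin n) (hj : π j = j) :
    ∃ i k : Fin n, i < j ∧ j < k ∧ π j < π i ∧ π k < π j := by
  -- j is not 0
  have hj1 : 1 ≤ (j : ℕ) := by
    by_contra h
    push_neg at h
    interval_cases hjv : (j : ℕ)
    exact hirr ⟨1, le_refl 1, lt_of_lt_of_le one_lt_two hn, fun i hi => by
      have : (i : ℕ) = (j : ℕ) := by omega
      have : i = j := Fin.ext this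
      subst this
      rw [hj]; omega⟩
  -- j is not n-1
  have hjn : (j : ℕ) + 1 < n := by
    by_contra h
    push_neg at h
    have hje : (j : ℕ) = n - 1 := by omega
    refine hirr ⟨n - 1, by omega, by omega, fun i hi => ?_⟩
    have hne : i ≠ j := by
      intro he; subst he; omega
    have : π i ≠ j := by
      intro he
      exact hne (π.injective (by rw [he, hj]))
    have := (π i).isLt
    have : (π i : ℕ) ≠ (j : ℕ) := fun he => ‹π i ≠ j› (Fin.ext he)
    omega
  -- existence of i < j with π i > j
  obtain ⟨i, hij, hji⟩ : ∃ i, i < j ∧ j < π i := by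
    by_contra h
    push_neg at h
    refine hirr ⟨(j : ℕ), hj1, j.isLt, fun i hi => ?_⟩
    have hij : i < j := hi
    have h2 := h i hij
    have : π i ≠ j := by
      intro he
      have : i = j := π.injective (by rw [he, hj])
      subst this; exact absurd rfl (ne_of_lt hij)
    have : (π i : ℕ) ≠ (j : ℕ) := fun he => ‹π i ≠ j› (Fin.ext he)
    have : (π i : ℕ) ≤ (j : ℕ) := h2
    omega
  -- existence of k > j with π k < j
  obtain ⟨k, hjk, hkj⟩ : ∃ k, j < k ∧ π k < j := by
    by_contra h
    push_neg at h
    -- every k > j has π k > j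
    have hbig : ∀ k : Fin n, j < k → j < π k := by
      intro k hk
      have h2 := h k hk
      have : π k ≠ j := by
        intro he
        have : k = j := π.injective (by rw [he, hj])
        subst this; exact absurd rfl (ne_of_gt hk)
      have : (π k : ℕ) ≠ (j : ℕ) := fun he => ‹π k ≠ j› (Fin.ext he)
      have : (j : ℕ) ≤ (π k : ℕ) := h2
      exact Fin.lt_def.mpr (by omega)
    set S : Finset (Fin n) := Finset.univ.filter (fun x => j < x) with hS
    have himg : Finset.image π S ⊆ S := by
      intro x hx
      simp only [Finset.mem_image] at hx
      obtain ⟨a, ha, hax⟩ := hx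
      simp only [hS, Finset.mem_filter, Finset.mem_univ, true_and] at ha ⊢
      rw [← hax]; exact hbig a ha
    have hcard : (Finset.image π S).card = S.card :=
      Finset.card_image_of_injective S π.injective
    have heq : Finset.image π S = S :=
      Finset.eq_of_subset_of_card_le himg (le_of_eq hcard.symm)
    refine hirr ⟨(j : ℕ) + 1, by omega, hjn, fun i hi => ?_⟩
    have hiS : i ∉ S := by
      simp only [hS, Finset.mem_filter, Finset.mem_univ, true_and]
      intro hcon
      have : (j : ℕ) < (i : ℕ) := hcon
      omega
    have hpiS : π i ∉ S := by
      intro hcon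
      rw [← heq] at hcon
      simp only [Finset.mem_image] at hcon
      obtain ⟨a, ha, hax⟩ := hcon
      have : a = i := π.injective hax
      subst this; exact hiS ha
    simp only [hS, Finset.mem_filter, Finset.mem_univ, true_and, not_lt] at hpiS
    have : (π i : ℕ) ≤ (j : ℕ) := hpiS
    omega
  exact ⟨i, k, hij, hjk, by rw [hj]; exact hji, by rw [hj]; exact hkj⟩
end

section
/- Suppose a permutation π of {1,...,n} contains a unique occurrence of the pattern 3412 and avoids the pattern 321. If positions i < j < k < l with π(k) < π(l) < π(i) < π(j) form the unique occurrence of 3412, then k = j + 1 and π(i) = π(l) + 1. -/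
/-- If `π` has a unique occurrence of `3412` and avoids `321`, then in the
occurrence `π(k) < π(l) < π(i) < π(j)` (with `i < j < k < l`) the columns `j`, `k`
are contiguous and the values `π(l)`, `π(i)` are contiguous. -/
theorem unique_3412_contiguous (n : ℕ) (π : Equiv.Perm (Fin n)) (i j k l : Fin n)
    (hij : i < j) (hjk : j < k) (hkl : k < l)
    (hpat : π k < π l ∧ π l < π i ∧ π i < π j)
    (huniq : ∀ i' j' k' l' : Fin n, i' < j' → j' < k' → k' < l' →
      π k' < π l' → π l' < π i' → π i' < π j' → i' = i ∧ j' = j ∧ k' = k ∧ l' = l)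
    (havoid : ¬ ∃ a b c : Fin n, a < b ∧ b < c ∧ π c < π b ∧ π b < π a) :
    (k : ℕ) = (j : ℕ) + 1 ∧ (π i : ℕ) = (π l : ℕ) + 1 := by
  obtain ⟨h1, h2, h3⟩ := hpat
  have hkj : (k : ℕ) = (j : ℕ) + 1 := by
    by_contra hne
    have hjk1 : (j : ℕ) + 1 < (k : ℕ) :=
      lt_of_le_of_ne (Nat.succ_le_of_lt hjk) (fun h => hne h.symm)
    set m : Fin n := ⟨(j : ℕ) + 1, lt_trans hjk1 k.isLt⟩ with hm
    have hjm : j < m := by simp [Fin.lt_def, hm]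
    have hmk : m < k := hjk1
    rcases lt_or_ge (π m) (π j) with hlt | hge
    · rcases lt_or_ge (π k) (π m) with h4 | h5
      · exact havoid ⟨j, m, k, hjm, hmk, h4, hlt⟩
      · have hne' : π m ≠ π k := fun h => (ne_of_lt hmk) (π.injective h)
        have hmk' : π m < π k := lt_of_le_of_ne h5 hne'
        obtain ⟨_, _, hk, _⟩ := huniq i j m l hij hjm (lt_trans hmk hkl)
          (lt_trans hmk' h1) h2 h3
        exact absurd hk (ne_of_lt hmk)
    · have hne' : π j ≠ π m := fun h => (ne_of_lt hjm) (π.injective h)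
      have hjm' : π j < π m := lt_of_le_of_ne hge hne'
      obtain ⟨_, hj, _, _⟩ := huniq i m k l (lt_trans hij hjm) hmk hkl h1 h2
        (lt_trans h3 hjm')
      exact absurd hj (ne_of_gt hjm)
  refine ⟨hkj, ?_⟩
  by_contra hne
  have hli1 : (π l : ℕ) + 1 < (π i : ℕ) :=
    lt_of_le_of_ne (Nat.succ_le_of_lt h2) (fun h => hne h.symm)
  set v : Fin n := ⟨(π l : ℕ) + 1, lt_trans hli1 (π i).isLt⟩ with hv
  set m : Fin n := π.symm v with hm
  have hπm : π m = v := π.apply_symm_apply v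
  have hlv : π l < π m := by
    rw [hπm]; exact Fin.lt_def.mpr (Nat.lt_succ_self _)
  have hvi : π m < π i := by rw [hπm]; exact hli1
  rcases lt_trichotomy m j with hmj | hmj | hmj
  · obtain ⟨hi, _, _, _⟩ := huniq m j k l hmj hjk hkl h1 hlv (lt_trans hvi h3)
    rw [hi] at hvi
    exact absurd rfl (ne_of_lt hvi)
  · rw [hmj] at hvi
    exact absurd (lt_trans hvi h3) (lt_irrefl _)
  · rcases lt_trichotomy m l with hml | hml | hml
    · exact havoid ⟨i, m, l, lt_trans hij hmj, hml, hlv, hvi⟩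
    · rw [hml] at hlv
      exact absurd hlv (lt_irrefl _)
    · obtain ⟨_, _, hk, _⟩ := huniq i j l m hij (lt_trans hjk hkl) hml hlv hvi h3
      exact absurd hk (ne_of_gt hkl)
end

section
/- If a permutation π of {1,...,n} (n ≥ 2) is irreducible and satisfies the quadrant condition (for every k with 2 ≤ k ≤ n, there is exactly one index i < k with π(i) ≥ k), and π has no fixed point, then π avoids the patterns 3412, and contains no two distinct occurrences of the pattern 321. -/
/-- Uniqueness of the "crossing" on the position side: if `p < m ≤ π p` and
`p' < m ≤ π p'`, then `p = p'`. -/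
lemma quad_unique_left {n : ℕ} {π : Equiv.Perm (Fin n)}
    (hquad : ∀ k : ℕ, 2 ≤ k → k ≤ n →
      (Finset.univ.filter fun i : Fin n => (i : ℕ) + 1 < k ∧ k ≤ (π i : ℕ) + 1).card = 1)
    {m : ℕ} {p p' : Fin n} (h1 : (p : ℕ) < m) (h2 : m ≤ (π p : ℕ))
    (h3 : (p' : ℕ) < m) (h4 : m ≤ (π p' : ℕ)) : p = p' := by
  have hlt : ((π p : ℕ)) < n := (π p).isLt
  have hc := hquad (m + 1) (by omega) (by omega)
  refine Finset.card_le_one.mp (le_of_eq hc) p ?_ p' ?_ <;>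
    simp only [Finset.mem_filter, Finset.mem_univ, true_and] <;> omega

/-- Uniqueness of the "crossing" on the value side: if `π q < m ≤ q` and
`π q' < m ≤ q'`, then `q = q'`. -/
lemma quad_unique_right {n : ℕ} {π : Equiv.Perm (Fin n)}
    (hquad : ∀ k : ℕ, 2 ≤ k → k ≤ n →
      (Finset.univ.filter fun i : Fin n => (i : ℕ) + 1 < k ∧ k ≤ (π i : ℕ) + 1).card = 1)
    {m : ℕ} {q q' : Fin n} (h1 : m ≤ (q : ℕ)) (h2 : (π q : ℕ) < m)
    (h3 : m ≤ (q' : ℕ)) (h4 : (π q' : ℕ) < m) : q = q' := by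
  have hqn : (q : ℕ) < n := q.isLt
  have hmn : m < n := by omega
  -- The number of `i < m` with `π i ≥ m` is `1`.
  have hc := hquad (m + 1) (by omega) (by omega)
  have hS : (Finset.univ.filter fun i : Fin n => (i : ℕ) < m ∧ m ≤ (π i : ℕ)).card = 1 := by
    rw [← hc]
    congr 1
    ext i
    simp only [Finset.mem_filter, Finset.mem_univ, true_and]
    omega
  -- `#{i : i < m} = m`
  have hA : (Finset.univ.filter fun i : Fin n => (i : ℕ) < m).card = m := by
    have hsub : ∀ x ∈ Finset.range m, x < n := fun x hx =>
      lt_of_lt_of_le (Finset.mem_range.mp hx) (le_of_lt hmn)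
    have : (Finset.univ.filter fun i : Fin n => (i : ℕ) < m)
        = (Finset.range m).attachFin hsub := by
      ext i
      simp [Finset.mem_attachFin]
    rw [this, Finset.card_attachFin, Finset.card_range]
  -- `#{i : π i < m} = #{i : i < m}`
  have hB : (Finset.univ.filter fun i : Fin n => ((π i : ℕ)) < m).card
      = (Finset.univ.filter fun i : Fin n => (i : ℕ) < m).card := by
    refine Finset.card_equiv (π : Fin n ≃ Fin n) fun i => ?_
    simp
  -- decompose both sides
  have e1 := Finset.card_filter_add_card_filter_not
    (s := Finset.univ.filter fun i : Fin n => (i : ℕ) < m)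
    (p := fun i : Fin n => ((π i : ℕ)) < m)
  have e2 := Finset.card_filter_add_card_filter_not
    (s := Finset.univ.filter fun i : Fin n => ((π i : ℕ)) < m)
    (p := fun i : Fin n => (i : ℕ) < m)
  rw [Finset.filter_filter, Finset.filter_filter] at e1 e2
  have h12 : (Finset.univ.filter fun i : Fin n => (i : ℕ) < m ∧ ((π i : ℕ)) < m)
      = Finset.univ.filter fun i : Fin n => ((π i : ℕ)) < m ∧ (i : ℕ) < m := by
    ext i
    simp only [Finset.mem_filter, Finset.mem_univ, true_and]
    tauto
  have hSeq : (Finset.univ.filter fun i : Fin n => (i : ℕ) < m ∧ ¬ ((π i : ℕ)) < m)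
      = Finset.univ.filter fun i : Fin n => (i : ℕ) < m ∧ m ≤ (π i : ℕ) := by
    ext i
    simp only [Finset.mem_filter, Finset.mem_univ, true_and]
    omega
  rw [h12, hSeq] at e1
  -- hence `#{i : π i < m ∧ ¬ i < m} = 1`
  have hT : (Finset.univ.filter fun i : Fin n => ((π i : ℕ)) < m ∧ ¬ (i : ℕ) < m).card = 1 := by
    omega
  refine Finset.card_le_one.mp (le_of_eq hT) q ?_ q' ?_ <;>
    simp only [Finset.mem_filter, Finset.mem_univ, true_and] <;> omega

/-- An irreducible fixed-point-free permutation satisfying the quadrant condition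
avoids `3412` and contains at most one occurrence of `321`. -/
theorem quadrant_condition_patterns (n : ℕ) (hn : 2 ≤ n) (π : Equiv.Perm (Fin n))
    (hirr : PermIrreducible n π)
    (hquad : ∀ k : ℕ, 2 ≤ k → k ≤ n →
      (Finset.univ.filter fun i : Fin n => (i : ℕ) + 1 < k ∧ k ≤ (π i : ℕ) + 1).card = 1)
    (hfix : ∀ j : Fin n, π j ≠ j) :
    (¬ ∃ i j k l : Fin n, i < j ∧ j < k ∧ k < l ∧ π k < π l ∧ π l < π i ∧ π i < π j) ∧
    (∀ a b c a' b' c' : Fin n, a < b → b < c → π c < π b → π b < π a →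
      a' < b' → b' < c' → π c' < π b' → π b' < π a' → a = a' ∧ b = b' ∧ c = c') := by
  -- there is no occurrence of `321` at all
  have h321 : ∀ a b c : Fin n, a < b → b < c → π c < π b → π b < π a → False := by
    intro a b c hab hbc h1 h2
    rw [Fin.lt_def] at hab hbc h1 h2
    have hb := hfix b
    rcases lt_or_ge ((π b : ℕ)) (b : ℕ) with hlt | hle
    · -- `π b < b`: both `b` and `c` are right crossings at level `b`
      have := quad_unique_right hquad (le_refl (b : ℕ)) hlt
        (le_of_lt hbc) (by omega)
      rw [Fin.ext_iff] at this
      omega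
    · -- `π b > b`: both `a` and `b` are left crossings at level `b + 1`
      have hblt : (b : ℕ) < (π b : ℕ) := by
        rcases lt_or_eq_of_le hle with h | h
        · exact h
        · exact absurd (Fin.ext h.symm) hb
      have := quad_unique_left hquad (m := (b : ℕ) + 1) (p := a) (p' := b)
        (by omega) (by omega) (by omega) (by omega)
      rw [Fin.ext_iff] at this
      omega
  constructor
  · -- no `3412`
    rintro ⟨i, j, k, l, hij, hjk, hkl, h1, h2, h3⟩
    rw [Fin.lt_def] at hij hjk hkl h1 h2 h3
    -- `π j > j`
    have hj : (j : ℕ) < (π j : ℕ) := by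
      by_contra h
      push_neg at h
      have hj' : (π j : ℕ) < (j : ℕ) := by
        rcases lt_or_eq_of_le h with h' | h'
        · exact h'
        · exact absurd (Fin.ext h') (hfix j)
      have := quad_unique_right hquad (m := (j : ℕ)) (q := j) (q' := l)
        (le_refl _) hj' (by omega) (by omega)
      rw [Fin.ext_iff] at this
      omega
    -- `π k < k`
    have hk : (π k : ℕ) < (k : ℕ) := by
      by_contra h
      push_neg at h
      have hk' : (k : ℕ) < (π k : ℕ) := by
        rcases lt_or_eq_of_le h with h' | h'
        · exact h'
        · exact absurd (Fin.ext h'.symm) (hfix k)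
      have := quad_unique_left hquad (m := (k : ℕ) + 1) (p := i) (p' := j)
        (by omega) (by omega) (by omega) (by omega)
      rw [Fin.ext_iff] at this
      omega
    -- `π i ≤ j` by uniqueness of the left crossing at level `j + 1`
    have hi_le : (π i : ℕ) ≤ (j : ℕ) := by
      by_contra h
      push_neg at h
      have := quad_unique_left hquad (m := (j : ℕ) + 1) (p := i) (p' := j)
        (by omega) (by omega) (by omega) (by omega)
      rw [Fin.ext_iff] at this
      omega
    -- `π l ≥ k` by uniqueness of the right crossing at level `k`
    have hl_ge : (k : ℕ) ≤ (π l : ℕ) := by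
      by_contra h
      push_neg at h
      have := quad_unique_right hquad (m := (k : ℕ)) (q := k) (q' := l)
        (le_refl _) hk (by omega) (by omega)
      rw [Fin.ext_iff] at this
      omega
    omega
  · intro a b c a' b' c' hab hbc h1 h2 _ _ _ _
    exact absurd (h321 a b c hab hbc h1 h2) not_false
end
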